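/- arXiv:2410.01367 — 2 statements merged into one kernel-verified Lean document; each statement's English description precedes it below -/
import Mathlib

section
/- For every k ≥ 1 and every time t, if the k-DWL test run on two dynamic graphs DG = (V, E) and DG' = (V', E') with constant initial labeling functions (the same constant on both graphs) and a common injective hash function decides that DG and DG' are non-isomorphic until t (i.e., at some iteration j the multiset of k-DWL colors of all k-node tuples of DG differs from that of DG'), then the (k+1)-DWL test, run with a constant initial labeling and an injective hash, also decides that DG and DG' are non-isomorphic until t (i.e., at some iteration the multiset of (k+1)-DWL colors of all (k+1)-node tuples of DG differs from that of DG'). -/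
/-- Historical interaction sequence `A^{<t}_{u,v}`: the sorted list of all
timestamps `t' < t` with `(u,v,t') ∈ E` or `(v,u,t') ∈ E`. -/
noncomputable def hist {V : Type} [DecidableEq V] (E : Multiset (V × V × ℝ)) (t : ℝ)
    (u v : V) : List ℝ :=
  ((E.filter fun e => ((e.1 = u ∧ e.2.1 = v) ∨ (e.1 = v ∧ e.2.1 = u)) ∧ e.2.2 < t).map
    fun e => e.2.2).sort (· ≤ ·)

/-- Historical neighborhood `N(u,t)`: the multiset of pairs `(w, t')` with `t' < t`
and `(u,w,t') ∈ E` or `(w,u,t') ∈ E` (with multiplicity). -/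
noncomputable def nbhd {V : Type} [DecidableEq V] (E : Multiset (V × V × ℝ)) (t : ℝ)
    (u : V) : Multiset (V × ℝ) :=
  (E.filter fun e => (e.1 = u ∨ e.2.1 = u) ∧ e.2.2 < t).map
    fun e => if e.1 = u then (e.2.1, e.2.2) else (e.1, e.2.2)

/-- The multiset of replacing nodes used in the aggregation step of the `k`-DWL test:
for `k = 1` (i.e. the 1-DWL test) the aggregation ranges over the historical
neighbors of the node (with multiplicity), and for every other `k` over all
nodes of the graph. -/
noncomputable def replNodes {V : Type} [Fintype V] [DecidableEq V]
    (E : Multiset (V × V × ℝ)) (t : ℝ) : (k : ℕ) → (Fin k → V) → Multiset V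
  | 1, s => (nbhd E t (s 0)).map Prod.fst
  | _, _ => (Finset.univ : Finset V).val

/-- `k`-DWL colors at time `t` (for `k = 1` this is the 1-DWL test):
`c⁰ = l` and `c^{j+1}(s) = HASH (c^j(s), {{ φ^j(s,w) : w }})` where
`φ^j(s,w) = ((c^j(r₁(s,w)), ..., c^j(r_k(s,w))), (A^{<t}_{w,v₁}, ..., A^{<t}_{w,v_k}))`. -/
noncomputable def DWL {V : Type} [Fintype V] [DecidableEq V] {C : Type} (k : ℕ)
    (E : Multiset (V × V × ℝ)) (t : ℝ) (l : (Fin k → V) → C)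
    (hash : C × Multiset ((Fin k → C) × (Fin k → List ℝ)) → C) :
    ℕ → (Fin k → V) → C
  | 0 => l
  | j + 1 => fun s =>
      hash (DWL k E t l hash j s,
        (replNodes E t k s).map fun w =>
          (fun i => DWL k E t l hash j (Function.update s i w),
           fun i => hist E t w (s i)))

lemma hist_length {V : Type} [DecidableEq V] (E : Multiset (V × V × ℝ)) (t : ℝ) (u v : V) :
    (hist E t u v).length =
      Multiset.card (E.filter fun e => ((e.1 = u ∧ e.2.1 = v) ∨ (e.1 = v ∧ e.2.1 = u)) ∧ e.2.2 < t) := by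
  simp [hist]

lemma nbhd_eq_bind {V : Type} [Fintype V] [DecidableEq V] (E : Multiset (V × V × ℝ)) (t : ℝ)
    (u : V) :
    (nbhd E t u).map Prod.fst =
      (Finset.univ : Finset V).val.bind
        (fun x => Multiset.replicate (hist E t x u).length x) := by
  ext a
  rw [Multiset.count_bind]
  rw [show (Multiset.map
      (fun b => Multiset.count a (Multiset.replicate (hist E t b u).length b))
      (Finset.univ : Finset V).val).sum
      = ∑ b : V, Multiset.count a (Multiset.replicate (hist E t b u).length b) from rfl]
  simp only [Multiset.count_replicate]
  rw [Finset.sum_ite_eq' Finset.univ a (fun b => (hist E t b u).length)]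
  simp only [Finset.mem_univ, if_true]
  have hcomp : (Prod.fst ∘ fun e : V × V × ℝ => if e.1 = u then (e.2.1, e.2.2) else (e.1, e.2.2))
      = fun e : V × V × ℝ => if e.1 = u then e.2.1 else e.1 := by
    funext e; by_cases h : e.1 = u <;> simp [h]
  rw [hist_length, nbhd, Multiset.map_map, hcomp, Multiset.count_map, Multiset.filter_filter]
  congr 1
  apply Multiset.filter_congr
  rintro ⟨x, y, τ⟩ _
  by_cases hx : x = u <;> simp only [hx, if_pos, if_neg, ite_true, ite_false] <;> aesop

lemma update_comp_castSucc {V : Type} {k : ℕ} (s : Fin (k+1) → V) (i : Fin k) (w : V) :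
    (Function.update s i.castSucc w) ∘ Fin.castSucc = Function.update (s ∘ Fin.castSucc) i w := by
  funext x
  by_cases h : x = i
  · subst h; simp [Function.comp]
  · have h' : x.castSucc ≠ i.castSucc := fun hc => h (Fin.castSucc_injective _ hc)
    simp [Function.comp, Function.update_of_ne h, Function.update_of_ne h']

lemma univ_map_castSucc {V : Type} [Fintype V] [DecidableEq V] (k : ℕ) :
    ((Finset.univ : Finset (Fin (k+1) → V)).val.map (· ∘ Fin.castSucc)) =
      (Fintype.card V) • (Finset.univ : Finset (Fin k → V)).val := by
  ext p
  rw [Multiset.count_nsmul, Multiset.count_map]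
  have h1 : Multiset.count p (Finset.univ : Finset (Fin k → V)).val = 1 :=
    Multiset.count_eq_one_of_mem (Finset.univ.nodup) (Finset.mem_univ p)
  rw [h1, mul_one]
  rw [show Multiset.card (Multiset.filter (fun s : Fin (k+1) → V => p = s ∘ Fin.castSucc)
      (Finset.univ : Finset (Fin (k+1) → V)).val)
      = (Finset.filter (fun s : Fin (k+1) → V => p = s ∘ Fin.castSucc) Finset.univ).card from rfl]
  rw [← Fintype.card_subtype]
  refine Fintype.card_congr ?_
  refine
    { toFun := fun s => s.1 (Fin.last k)
      invFun := fun w => ⟨Fin.snoc p w, by funext i; simp [Function.comp]⟩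
      left_inv := ?_
      right_inv := fun w => by simp }
  rintro ⟨s, hs⟩
  ext x
  refine Fin.lastCases ?_ ?_ x
  · simp
  · intro i
    simp only [Fin.snoc_castSucc]
    exact congrFun hs i

lemma replNodes_eq_univ {V : Type} [Fintype V] [DecidableEq V]
    (E : Multiset (V × V × ℝ)) (t : ℝ) {k : ℕ} (hk : 2 ≤ k) (s : Fin k → V) :
    replNodes E t k s = (Finset.univ : Finset V).val := by
  obtain ⟨n, rfl⟩ : ∃ n, k = n + 2 := ⟨k - 2, by omega⟩
  rfl

noncomputable def Gaux {C C' : Type} (k : ℕ) (c0 : C) (c0' : C')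
    (hash : C × Multiset ((Fin k → C) × (Fin k → List ℝ)) → C)
    (hash' : C' × Multiset ((Fin (k+1) → C') × (Fin (k+1) → List ℝ)) → C') :
    ℕ → C' → C
  | 0 => fun _ => c0
  | j + 1 => fun x =>
      let y := @Function.invFun _ _ ⟨(c0', 0)⟩ hash' x
      hash (Gaux k c0 c0' hash hash' j y.1,
        if k = 1 then
          y.2.bind fun ψ => Multiset.replicate (ψ.2 0).length
            ((fun _ => Gaux k c0 c0' hash hash' j (ψ.1 0)), (fun _ => ψ.2 0))
        else
          y.2.map fun ψ =>
            ((fun i => Gaux k c0 c0' hash hash' j (ψ.1 i.castSucc)),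
             (fun i => ψ.2 i.castSucc)))

lemma prefix_det {V C C' : Type} [Fintype V] [DecidableEq V] {k : ℕ} (hk : 1 ≤ k)
    (E : Multiset (V × V × ℝ)) (t : ℝ) (c0 : C) (c0' : C')
    (hash : C × Multiset ((Fin k → C) × (Fin k → List ℝ)) → C)
    (hash' : C' × Multiset ((Fin (k+1) → C') × (Fin (k+1) → List ℝ)) → C')
    (hinj : Function.Injective hash') :
    ∀ (j : ℕ) (s : Fin (k+1) → V),
      DWL k E t (fun _ => c0) hash j (s ∘ Fin.castSucc) =
      Gaux k c0 c0' hash hash' j (DWL (k+1) E t (fun _ => c0') hash' j s) := by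
  intro j
  induction j with
  | zero => intro s; rfl
  | succ j ih =>
    intro s
    have hinv : ∀ a, @Function.invFun _ _ ⟨(c0', 0)⟩ hash' (hash' a) = a := fun a =>
      @Function.leftInverse_invFun _ _ ⟨(c0', 0)⟩ _ hinj a
    simp only [DWL, Gaux]
    rw [hinv]
    refine congrArg hash (Prod.ext (ih s) ?_)
    by_cases hk1 : k = 1
    · subst hk1
      rw [if_pos rfl]
      rw [show replNodes E t 1 (s ∘ Fin.castSucc) = (nbhd E t ((s ∘ Fin.castSucc) 0)).map Prod.fst
        from rfl]
      rw [show (s ∘ Fin.castSucc) (0 : Fin 1) = s 0 from by simp [Function.comp]]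
      rw [replNodes_eq_univ E t (le_refl 2), Multiset.bind_map, nbhd_eq_bind, Multiset.map_bind]
      refine Multiset.bind_congr ?_
      intro x _
      rw [Multiset.map_replicate]
      congr 1
      refine Prod.ext ?_ ?_
      · funext i
        have hi : i = 0 := Subsingleton.elim i 0
        subst hi
        have h0 : (0 : Fin 1).castSucc = (0 : Fin 2) := rfl
        show DWL 1 E t (fun _ => c0) hash j (Function.update (s ∘ Fin.castSucc) (0 : Fin 1) x)
            = Gaux 1 c0 c0' hash hash' j
                (DWL (1+1) E t (fun _ => c0') hash' j (Function.update s (0 : Fin (1+1)) x))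
        rw [show Function.update (s ∘ Fin.castSucc) (0 : Fin 1) x
            = (Function.update s ((0 : Fin 1).castSucc) x) ∘ Fin.castSucc from
          (update_comp_castSucc s 0 x).symm, h0]
        exact ih (Function.update s 0 x)
      · funext i
        have hi : i = 0 := Subsingleton.elim i 0
        subst hi
        rfl
    · rw [if_neg hk1]
      rw [replNodes_eq_univ E t (by omega : 2 ≤ k), replNodes_eq_univ E t (by omega : 2 ≤ k+1),
        Multiset.map_map]
      refine Multiset.map_congr rfl ?_
      intro w _
      refine Prod.ext ?_ rfl
      funext i
      show DWL k E t (fun _ => c0) hash j (Function.update (s ∘ Fin.castSucc) i w)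
          = Gaux k c0 c0' hash hash' j
              (DWL (k+1) E t (fun _ => c0') hash' j (Function.update s i.castSucc w))
      rw [show Function.update (s ∘ Fin.castSucc) i w
          = (Function.update s i.castSucc w) ∘ Fin.castSucc from
        (update_comp_castSucc s i w).symm]
      exact ih (Function.update s i.castSucc w)


/-- Proposition 1: for every `k ≥ 1` and every time `t`, if the
`k`-DWL test run on two dynamic graphs with constant initial labelings (the same
constant on both graphs) and a common injective hash decides that the graphs are
non-isomorphic until `t` (at some iteration the multisets of colors of all
`k`-node tuples differ), then the `(k+1)`-DWL test, run with any constant initial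
labeling and any injective hash, also decides they are non-isomorphic until `t`. -/
theorem kDWL_hierarchy {V V' : Type} [Fintype V] [DecidableEq V]
    [Fintype V'] [DecidableEq V'] {C : Type}
    (k : ℕ) (hk : 1 ≤ k) (t : ℝ)
    (E : Multiset (V × V × ℝ)) (E' : Multiset (V' × V' × ℝ))
    (c0 : C)
    (hash : C × Multiset ((Fin k → C) × (Fin k → List ℝ)) → C)
    (hash_inj : Function.Injective hash)
    (hdecide : ∃ j : ℕ,
      (Finset.univ : Finset (Fin k → V)).val.map (DWL k E t (fun _ => c0) hash j) ≠
      (Finset.univ : Finset (Fin k → V')).val.map (DWL k E' t (fun _ => c0) hash j)) :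
    ∀ (C' : Type) (c0' : C')
      (hash' : C' × Multiset ((Fin (k + 1) → C') × (Fin (k + 1) → List ℝ)) → C'),
      Function.Injective hash' →
      ∃ j : ℕ,
        (Finset.univ : Finset (Fin (k + 1) → V)).val.map
            (DWL (k + 1) E t (fun _ => c0') hash' j) ≠
        (Finset.univ : Finset (Fin (k + 1) → V')).val.map
            (DWL (k + 1) E' t (fun _ => c0') hash' j) := by
  intro C' c0' hash' hinj'
  classical
  by_contra hcon
  push_neg at hcon
  obtain ⟨j, hj⟩ := hdecide
  -- card equality
  have hcard : Fintype.card V = Fintype.card V' := by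
    have h0 := congrArg Multiset.card (hcon 0)
    rw [Multiset.card_map, Multiset.card_map] at h0
    have hv : ((Finset.univ : Finset (Fin (k+1) → V)).val.card : ℕ)
        = Fintype.card V ^ (k+1) := by
      rw [show (Finset.univ : Finset (Fin (k+1) → V)).val.card
          = Fintype.card (Fin (k+1) → V) from rfl, Fintype.card_fun, Fintype.card_fin]
    have hv' : ((Finset.univ : Finset (Fin (k+1) → V')).val.card : ℕ)
        = Fintype.card V' ^ (k+1) := by
      rw [show (Finset.univ : Finset (Fin (k+1) → V')).val.card
          = Fintype.card (Fin (k+1) → V') from rfl, Fintype.card_fun, Fintype.card_fin]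
    rw [hv, hv'] at h0
    exact Nat.pow_left_injective (by omega) h0
  have key : ∀ j : ℕ,
      (Fintype.card V) • ((Finset.univ : Finset (Fin k → V)).val.map
          (DWL k E t (fun _ => c0) hash j))
        = (Fintype.card V') • ((Finset.univ : Finset (Fin k → V')).val.map
          (DWL k E' t (fun _ => c0) hash j)) := by
    intro j
    have h := congrArg (Multiset.map (Gaux k c0 c0' hash hash' j)) (hcon j)
    rw [Multiset.map_map, Multiset.map_map] at h
    have hV : Multiset.map ((Gaux k c0 c0' hash hash' j) ∘ DWL (k+1) E t (fun _ => c0') hash' j)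
          (Finset.univ : Finset (Fin (k+1) → V)).val
        = Multiset.map (DWL k E t (fun _ => c0) hash j)
          (Multiset.map (· ∘ Fin.castSucc) (Finset.univ : Finset (Fin (k+1) → V)).val) := by
      rw [Multiset.map_map]
      exact Multiset.map_congr rfl
        (fun s _ => (prefix_det hk E t c0 c0' hash hash' hinj' j s).symm)
    have hV' : Multiset.map ((Gaux k c0 c0' hash hash' j) ∘ DWL (k+1) E' t (fun _ => c0') hash' j)
          (Finset.univ : Finset (Fin (k+1) → V')).val
        = Multiset.map (DWL k E' t (fun _ => c0) hash j)
          (Multiset.map (· ∘ Fin.castSucc) (Finset.univ : Finset (Fin (k+1) → V')).val) := by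
      rw [Multiset.map_map]
      exact Multiset.map_congr rfl
        (fun s _ => (prefix_det hk E' t c0 c0' hash hash' hinj' j s).symm)
    rw [hV, hV', univ_map_castSucc, univ_map_castSucc, Multiset.map_nsmul, Multiset.map_nsmul] at h
    exact h
  have hn : Fintype.card V ≠ 0 := by
    intro h0
    apply hj
    haveI : IsEmpty V := Fintype.card_eq_zero_iff.mp h0
    haveI : IsEmpty V' := Fintype.card_eq_zero_iff.mp (hcard ▸ h0)
    haveI : Nonempty (Fin k) := ⟨⟨0, by omega⟩⟩
    haveI : IsEmpty (Fin k → V) := by infer_instance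
    haveI : IsEmpty (Fin k → V') := by infer_instance
    rw [Finset.univ_eq_empty (α := Fin k → V), Finset.univ_eq_empty (α := Fin k → V')]
    rfl
  apply hj
  ext x
  have hc := congrArg (Multiset.count x) (key j)
  rw [Multiset.count_nsmul, Multiset.count_nsmul, ← hcard] at hc
  exact Nat.eq_of_mul_eq_mul_left (Nat.pos_of_ne_zero hn) hc
end

section
/- Fix k ≥ 1 and a time t, and run the k-DWL and (k+1)-DWL tests on two dynamic graphs DG = (V, E) and DG' = (V', E') with constant initial labeling functions (the same constant on both graphs) and common injective hash functions. Then for every iteration j ≥ 0 and all (k+1)-node tuples (v_1, ..., v_{k+1}) ∈ V^{k+1} and (v'_1, ..., v'_{k+1}) ∈ (V')^{k+1}: if the (k+1)-DWL colors satisfy c^{(j)}_{k+1,t}((v_1, ..., v_{k+1})) = c^{(j)}_{k+1,t}((v'_1, ..., v'_{k+1})), then the k-DWL colors of the projected tuples satisfy c^{(j)}_{k,t}((v_1, ..., v_k)) = c^{(j)}_{k,t}((v'_1, ..., v'_k)). -/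
-- auxiliary lemmas
lemma replNodes_two_add {V : Type} [Fintype V] [DecidableEq V]
    (E : Multiset (V × V × ℝ)) (t : ℝ) (m : ℕ) (s : Fin (m + 2) → V) :
    replNodes E t (m + 2) s = (Finset.univ : Finset V).val := rfl

lemma replNodes_one {V : Type} [Fintype V] [DecidableEq V]
    (E : Multiset (V × V × ℝ)) (t : ℝ) (s : Fin 1 → V) :
    replNodes E t 1 s = (nbhd E t (s 0)).map Prod.fst := rfl

lemma rel_of_map_eq {α β γ : Type*} {s : Multiset α} {t : Multiset β}
    {f : α → γ} {g : β → γ} (h : s.map f = t.map g) :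
    Multiset.Rel (fun a b => f a = g b) s t := by
  rw [← Multiset.rel_eq] at h
  exact Multiset.rel_map.mp h

lemma map_eq_of_rel {α β γ : Type*} {s : Multiset α} {t : Multiset β}
    {r : α → β → Prop} {f : α → γ} {g : β → γ}
    (h : Multiset.Rel r s t) (hfg : ∀ a b, r a b → f a = g b) :
    s.map f = t.map g := by
  rw [← Multiset.rel_eq, Multiset.rel_map]
  exact h.mono fun a _ b _ hab => hfg a b hab

lemma update_castSucc {V : Type} {n : ℕ} [DecidableEq V] (v : Fin (n + 1) → V)
    (i : Fin n) (w : V) :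
    (fun i' : Fin n => Function.update v i.castSucc w i'.castSucc) =
      Function.update (fun i' : Fin n => v i'.castSucc) i w := by
  funext i'
  simp [Function.update_apply, Fin.castSucc_inj]

lemma nbhd_as_bind {W : Type} [Fintype W] [DecidableEq W] (F : Multiset (W × W × ℝ))
    (t : ℝ) (u : W) :
    (nbhd F t u).map Prod.fst =
      (Finset.univ.val : Multiset W).bind
        (fun w => Multiset.replicate (hist F t w u).length w) := by
  classical
  ext a
  rw [Multiset.count_bind]
  have hlen : ∀ w : W, (hist F t w u).length =
      Multiset.countP (fun e : W × W × ℝ =>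
        ((e.1 = w ∧ e.2.1 = u) ∨ (e.1 = u ∧ e.2.1 = w)) ∧ e.2.2 < t) F := by
    intro w
    rw [hist, Multiset.length_sort, Multiset.card_map, Multiset.countP_eq_card_filter]
  have hrhs : (Multiset.map (fun b => Multiset.count a
      (Multiset.replicate (hist F t b u).length b)) Finset.univ.val).sum
      = (hist F t a u).length := by
    rw [Multiset.map_congr rfl
      (fun b _ => Multiset.count_replicate a b (hist F t b u).length)]
    have h2 : (Multiset.map (fun b => if b = a then (hist F t b u).length else 0)
        Finset.univ.val).sum
        = ∑ b : W, if b = a then (hist F t b u).length else 0 := rfl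
    rw [h2, Finset.sum_ite_eq' Finset.univ a (fun b => (hist F t b u).length)]
    simp
  rw [hrhs, hlen, nbhd, Multiset.map_map, Multiset.count_map,
    ← Multiset.countP_eq_card_filter, Multiset.countP_filter]
  apply Multiset.countP_congr rfl
  rintro ⟨x, y, s⟩ -
  simp only [Function.comp_apply, eq_iff_iff]
  by_cases hx : x = u
  · constructor
    · rintro ⟨ha, -, hs⟩
      rw [if_pos hx] at ha
      exact ⟨Or.inr ⟨hx, ha.symm⟩, hs⟩
    · rintro ⟨h, hs⟩
      refine ⟨?_, ⟨Or.inl hx, hs⟩⟩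
      rw [if_pos hx]
      rcases h with ⟨hxa, hy⟩ | ⟨-, hy⟩
      · rw [hy, ← hx]; exact hxa.symm
      · exact hy.symm
  · constructor
    · rintro ⟨ha, hxy, hs⟩
      simp only [if_neg hx] at ha
      rcases hxy with h | h
      · exact absurd h hx
      · exact ⟨Or.inl ⟨ha.symm, h⟩, hs⟩
    · rintro ⟨h, hs⟩
      rcases h with ⟨ha, hy⟩ | ⟨hu, hy⟩
      · exact ⟨by simp [if_neg hx, ha.symm], Or.inr hy, hs⟩
      · exact absurd hu hx

theorem kDWL_aux {C C' : Type} (m : ℕ) (t : ℝ) (c0 : C) (c0' : C')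
    (hash : C × Multiset ((Fin (m + 1) → C) × (Fin (m + 1) → List ℝ)) → C)
    (hash_inj : Function.Injective hash)
    (hash' : C' × Multiset ((Fin (m + 2) → C') × (Fin (m + 2) → List ℝ)) → C')
    (hash'_inj : Function.Injective hash') :
    ∀ (j : ℕ) (V V' : Type) (_ : Fintype V) (_ : DecidableEq V)
      (_ : Fintype V') (_ : DecidableEq V')
      (E : Multiset (V × V × ℝ)) (E' : Multiset (V' × V' × ℝ))
      (v : Fin (m + 2) → V) (v' : Fin (m + 2) → V'),
      DWL (m + 2) E t (fun _ => c0') hash' j v =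
        DWL (m + 2) E' t (fun _ => c0') hash' j v' →
      DWL (m + 1) E t (fun _ => c0) hash j (fun i => v i.castSucc) =
        DWL (m + 1) E' t (fun _ => c0) hash j (fun i => v' i.castSucc) := by
  intro j
  induction j with
  | zero => intros; rfl
  | succ j ih =>
    intro V V' iV dV iV' dV' E E' v v' hcol
    simp only [DWL, replNodes_two_add] at hcol
    have h := hash'_inj hcol
    rw [Prod.mk.injEq] at h
    obtain ⟨h1, h2⟩ := h
    have hrel := rel_of_map_eq h2
    -- the key pointwise implication
    have key : ∀ (w : V) (w' : V'),
        ((fun i => DWL (m+2) E t (fun _ => c0') hash' j (Function.update v i w),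
          fun i => hist E t w (v i)) :
            (Fin (m+2) → C') × (Fin (m+2) → List ℝ)) =
        (fun i => DWL (m+2) E' t (fun _ => c0') hash' j (Function.update v' i w'),
          fun i => hist E' t w' (v' i)) →
        (((fun i => DWL (m+1) E t (fun _ => c0) hash j
              (Function.update (fun i' => v i'.castSucc) i w),
          fun i => hist E t w (v i.castSucc)) :
            (Fin (m+1) → C) × (Fin (m+1) → List ℝ)) =
        (fun i => DWL (m+1) E' t (fun _ => c0) hash j
              (Function.update (fun i' => v' i'.castSucc) i w'),
          fun i => hist E' t w' (v' i.castSucc))) ∧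
        hist E t w (v 0) = hist E' t w' (v' 0) := by
      intro w w' hφ
      rw [Prod.mk.injEq] at hφ
      obtain ⟨ha, hb⟩ := hφ
      refine ⟨?_, congrFun hb 0⟩
      rw [Prod.mk.injEq]
      constructor
      · funext i
        have := ih V V' iV dV iV' dV' E E'
          (Function.update v i.castSucc w) (Function.update v' i.castSucc w')
          (congrFun ha i.castSucc)
        rwa [update_castSucc, update_castSucc] at this
      · funext i
        exact congrFun hb i.castSucc
    have hc : DWL (m+1) E t (fun _ => c0) hash j (fun i => v i.castSucc) =
        DWL (m+1) E' t (fun _ => c0) hash j (fun i => v' i.castSucc) :=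
      ih V V' iV dV iV' dV' E E' v v' h1
    simp only [DWL]
    rw [hc]
    congr 1
    rw [Prod.mk.injEq]
    refine ⟨rfl, ?_⟩
    -- goal: multiset equality of the aggregated features at level m+1
    rcases m with _ | m'
    · -- k = 1 : aggregation over historical neighbors
      rw [replNodes_one, replNodes_one, nbhd_as_bind, nbhd_as_bind,
        Multiset.map_bind, Multiset.map_bind]
      simp only [Fin.castSucc_zero]
      rw [Multiset.bind, Multiset.bind]
      congr 1
      refine map_eq_of_rel hrel ?_
      intro w w' hw
      obtain ⟨hψ, hh⟩ := key w w' hw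
      simp only [Multiset.map_replicate]
      rw [hh]
      exact congrArg _ hψ
    · refine map_eq_of_rel hrel ?_
      intro w w' hw
      exact (key w w' hw).1

/-- fix `k ≥ 1` and a time `t`, and run the `k`-DWL and `(k+1)`-DWL
tests on two dynamic graphs with constant initial labelings (the same constant on
both graphs) and common injective hashes. Then for every iteration `j` and all
`(k+1)`-node tuples `v` of `DG` and `v'` of `DG'`, equality of the `(k+1)`-DWL
colors of `v` and `v'` implies equality of the `k`-DWL colors of the tuples
obtained by keeping the first `k` coordinates. -/
theorem kDWL_projection {V V' : Type} [Fintype V] [DecidableEq V]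
    [Fintype V'] [DecidableEq V'] {C C' : Type}
    (k : ℕ) (hk : 1 ≤ k) (t : ℝ)
    (E : Multiset (V × V × ℝ)) (E' : Multiset (V' × V' × ℝ))
    (c0 : C) (c0' : C')
    (hash : C × Multiset ((Fin k → C) × (Fin k → List ℝ)) → C)
    (hash_inj : Function.Injective hash)
    (hash' : C' × Multiset ((Fin (k + 1) → C') × (Fin (k + 1) → List ℝ)) → C')
    (hash'_inj : Function.Injective hash')
    (j : ℕ) (v : Fin (k + 1) → V) (v' : Fin (k + 1) → V')
    (hcol : DWL (k + 1) E t (fun _ => c0') hash' j v =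
            DWL (k + 1) E' t (fun _ => c0') hash' j v') :
    DWL k E t (fun _ => c0) hash j (fun i => v i.castSucc) =
    DWL k E' t (fun _ => c0) hash j (fun i => v' i.castSucc) := by
  cases k with
  | zero => omega
  | succ m =>
    exact kDWL_aux m t c0 c0' hash hash_inj hash' hash'_inj j V V' _ _ _ _ E E' v v' hcol
end
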